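/- The postprocessing correction minimizes the weighted norm: among all corrections d : E → ℝ on edges of a finite connected graph with weights ω_e > 0 such that U + d is locally conservative (i.e., for each vertex v, Σ_{e∋v} ± d_e = R(v) where Σ_v R(v) = 0), the correction of the form d_e = ω_e^{-1}(y(v₊) − y(v₋)) for the graph-Laplacian solution y uniquely minimizes the weighted norm Σ_e ω_e d_e². -/

import Mathlib

/-!
Write `g = ω⁻¹ ⟦y⟧`. By summation by parts, `g` is `ω`-orthogonal to every flux with zero
divergence, in particular to `d - g` for any admissible correction `d`; hence
`‖d‖²_ω = ‖g‖²_ω + ‖d - g‖²_ω`, which gives minimality and uniqueness. A solution `y` exists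
because on a connected graph the energy identity `⟨y, L y⟩ = Σ_e ω_e⁻¹ ⟦y⟧_e²` forces the
kernel of the Laplacian `L` to be the constants, so by rank–nullity its range is the whole
hyperplane of zero-sum functions, which contains `R`.
-/

/-- Jump of a vertex function across an oriented edge: `⟦y⟧_e = y(e₊) − y(e₋)`. -/
def edgeJump {V E : Type*} (ends : E → V × V) (y : V → ℝ) (e : E) : ℝ :=
  y (ends e).2 - y (ends e).1

/-- Signed incidence of vertex `v` in oriented edge `e`. -/
def incidence {V E : Type*} [DecidableEq V] (ends : E → V × V) (v : V) (e : E) : ℝ :=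
  (if (ends e).2 = v then (1:ℝ) else 0) - (if (ends e).1 = v then (1:ℝ) else 0)

theorem SimpleGraph.Preconnected.apply_eq_of_forall_adj {V α : Type*} {G : SimpleGraph V}
    (hG : G.Preconnected) {f : V → α} (hf : ∀ v w, G.Adj v w → f v = f w) (v w : V) :
    f v = f w := by
  obtain ⟨p⟩ := hG v w
  induction p with
  | nil => rfl
  | cons h _ ih => exact (hf _ _ h).trans ih

section WeightedSquares

variable {ι : Type*} [Fintype ι] {w : ι → ℝ}

theorem eq_zero_of_sum_mul_sq_eq_zero (hw : ∀ i, 0 < w i) {f : ι → ℝ}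
    (h : ∑ i, w i * f i ^ 2 = 0) (i : ι) : f i = 0 := by
  have hi := (Finset.sum_eq_zero_iff_of_nonneg fun j _ ↦ by
    have := hw j; positivity).mp h i (Finset.mem_univ i)
  simpa [(hw i).ne'] using hi

theorem sum_mul_sq_eq_add_sum_mul_sq_sub {a b : ι → ℝ}
    (h : ∑ i, w i * (a i * (b i - a i)) = 0) :
    ∑ i, w i * b i ^ 2 = ∑ i, w i * a i ^ 2 + ∑ i, w i * (b i - a i) ^ 2 := by
  have hsplit : ∀ i, w i * b i ^ 2 =
      w i * a i ^ 2 + w i * (b i - a i) ^ 2 + 2 * (w i * (a i * (b i - a i))) := fun i ↦ by ring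
  simp only [hsplit, Finset.sum_add_distrib, ← Finset.mul_sum, h, mul_zero, add_zero]

end WeightedSquares

section GraphCalculus

variable {V E : Type*} (ends : E → V × V)

theorem eq_of_forall_edgeJump_eq_zero
    (hconn : (SimpleGraph.fromRel (fun v w ↦ ∃ e, ends e = (v, w))).Preconnected)
    {y : V → ℝ} (hy : ∀ e, edgeJump ends y e = 0) (v w : V) : y v = y w := by
  refine hconn.apply_eq_of_forall_adj (fun v w hvw ↦ ?_) v w
  rcases (SimpleGraph.fromRel_adj _ _ _).mp hvw |>.2 with ⟨e, he⟩ | ⟨e, he⟩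
  all_goals have := hy e; simp only [edgeJump, he] at this; linarith

variable [DecidableEq V]

theorem sum_incidence_mul [Fintype V] (y : V → ℝ) (e : E) :
    ∑ v, incidence ends v e * y v = edgeJump ends y e := by
  simp [incidence, edgeJump, sub_mul, Finset.sum_sub_distrib]

variable [Fintype E]

noncomputable def weightedLaplacian (ω : E → ℝ) : (V → ℝ) →ₗ[ℝ] (V → ℝ) where
  toFun y v := ∑ e, incidence ends v e * ((ω e)⁻¹ * edgeJump ends y e)
  map_add' y z := by
    ext v
    simp only [edgeJump, Pi.add_apply, ← Finset.sum_add_distrib]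
    exact Finset.sum_congr rfl fun _ _ ↦ by ring
  map_smul' r y := by
    ext v
    simp only [edgeJump, Pi.smul_apply, smul_eq_mul, RingHom.id_apply, Finset.mul_sum]
    exact Finset.sum_congr rfl fun _ _ ↦ by ring

theorem weightedLaplacian_apply (ω : E → ℝ) (y : V → ℝ) (v : V) :
    weightedLaplacian ends ω y v = ∑ e, incidence ends v e * ((ω e)⁻¹ * edgeJump ends y e) :=
  rfl

variable [Fintype V]

/-- Summation by parts: the divergence is the adjoint of the edge jump. -/
theorem sum_mul_edgeJump (c : E → ℝ) (y : V → ℝ) :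
    ∑ e, c e * edgeJump ends y e = ∑ v, y v * ∑ e, incidence ends v e * c e := by
  simp_rw [← sum_incidence_mul ends, Finset.mul_sum]
  rw [Finset.sum_comm]
  exact Finset.sum_congr rfl fun _ _ ↦ Finset.sum_congr rfl fun _ _ ↦ by ring

theorem sum_mul_edgeJump_eq_zero {c : E → ℝ} (hc : ∀ v, ∑ e, incidence ends v e * c e = 0)
    (y : V → ℝ) : ∑ e, c e * edgeJump ends y e = 0 := by
  simp [sum_mul_edgeJump, hc]

theorem sum_mul_weightedLaplacian (ω : E → ℝ) (y : V → ℝ) :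
    ∑ v, y v * weightedLaplacian ends ω y v = ∑ e, (ω e)⁻¹ * edgeJump ends y e ^ 2 := by
  simp only [weightedLaplacian_apply, ← sum_mul_edgeJump]
  exact Finset.sum_congr rfl fun _ _ ↦ by ring

theorem sum_weightedLaplacian (ω : E → ℝ) (y : V → ℝ) :
    ∑ v, weightedLaplacian ends ω y v = 0 := by
  calc ∑ v, weightedLaplacian ends ω y v
      = ∑ v, (1 : V → ℝ) v * weightedLaplacian ends ω y v := by simp
    _ = ∑ e, (ω e)⁻¹ * edgeJump ends y e * edgeJump ends 1 e :=
      (sum_mul_edgeJump ends _ 1).symm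
    _ = 0 := by simp [edgeJump]

theorem ker_weightedLaplacian {ω : E → ℝ} (hω : ∀ e, 0 < ω e)
    (hconn : (SimpleGraph.fromRel (fun v w ↦ ∃ e, ends e = (v, w))).Connected) :
    LinearMap.ker (weightedLaplacian ends ω) = Submodule.span ℝ {1} := by
  refine le_antisymm (fun y hy ↦ ?_) ?_
  · have henergy : ∑ e, (ω e)⁻¹ * edgeJump ends y e ^ 2 = 0 := by
      simp [← sum_mul_weightedLaplacian, LinearMap.mem_ker.mp hy]
    have hjump := eq_zero_of_sum_mul_sq_eq_zero (fun e ↦ inv_pos.mpr (hω e)) henergy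
    obtain ⟨v₀⟩ := hconn.nonempty
    have hconst := eq_of_forall_edgeJump_eq_zero ends hconn.preconnected hjump
    exact Submodule.mem_span_singleton.mpr ⟨y v₀, funext fun v ↦ by simp [hconst v v₀]⟩
  · rw [Submodule.span_le, Set.singleton_subset_iff, SetLike.mem_coe, LinearMap.mem_ker]
    ext v
    simp [weightedLaplacian_apply, edgeJump]

theorem range_weightedLaplacian {ω : E → ℝ} (hω : ∀ e, 0 < ω e)
    (hconn : (SimpleGraph.fromRel (fun v w ↦ ∃ e, ends e = (v, w))).Connected) :
    LinearMap.range (weightedLaplacian ends ω) =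
      LinearMap.ker (Fintype.linearCombination ℝ fun _ : V ↦ (1 : ℝ)) := by
  have : Nonempty V := hconn.nonempty
  have hle : LinearMap.range (weightedLaplacian ends ω) ≤
      LinearMap.ker (Fintype.linearCombination ℝ fun _ : V ↦ (1 : ℝ)) := by
    rintro _ ⟨y, rfl⟩
    simpa [Fintype.linearCombination_apply] using sum_weightedLaplacian ends ω y
  have hsum_ne : Fintype.linearCombination ℝ (fun _ : V ↦ (1 : ℝ)) ≠ 0 := fun h ↦ by
    simpa [Fintype.linearCombination_apply] using LinearMap.congr_fun h 1
  refine Submodule.eq_of_le_of_finrank_eq hle (Nat.add_right_cancel (m := 1) ?_)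
  rw [Module.Dual.finrank_ker_add_one_of_ne_zero hsum_ne,
    ← (weightedLaplacian ends ω).finrank_range_add_finrank_ker, ker_weightedLaplacian ends hω hconn,
    finrank_span_singleton (one_ne_zero (α := V → ℝ))]

theorem sum_mul_sq_eq_add_sum_mul_sq_sub_of_weightedLaplacian {ω : E → ℝ}
    (hω : ∀ e, ω e ≠ 0) {y : V → ℝ} {d : E → ℝ}
    (hd : ∀ v, ∑ e, incidence ends v e * d e = weightedLaplacian ends ω y v) :
    ∑ e, ω e * d e ^ 2 = ∑ e, ω e * ((ω e)⁻¹ * edgeJump ends y e) ^ 2 +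
      ∑ e, ω e * (d e - (ω e)⁻¹ * edgeJump ends y e) ^ 2 := by
  refine sum_mul_sq_eq_add_sum_mul_sq_sub ?_
  have hdiv : ∀ v, ∑ e, incidence ends v e * (d e - (ω e)⁻¹ * edgeJump ends y e) = 0 :=
    fun v ↦ by simp only [mul_sub, Finset.sum_sub_distrib, hd, weightedLaplacian_apply, sub_self]
  rw [← sum_mul_edgeJump_eq_zero ends hdiv y]
  exact Finset.sum_congr rfl fun e _ ↦ by field_simp [hω e]

end GraphCalculus

/-- Among all edge corrections `d` making the flux locally conservative
(`Σ_{e∋v} ± d_e = R(v)` for every vertex `v`), the gradient-type correction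
`d_e = ω_e⁻¹ ⟦y⟧_e` coming from the weighted graph-Laplacian solution `y`
uniquely minimizes the weighted norm `Σ_e ω_e d_e²`. -/
theorem flux_postprocessing_minimizer
    {V E : Type*} [Fintype V] [Fintype E] [DecidableEq V]
    (ends : E → V × V) (ω : E → ℝ) (hω : ∀ e, 0 < ω e)
    (hconn : (SimpleGraph.fromRel (fun v w => ∃ e, ends e = (v, w))).Connected)
    (R : V → ℝ) (hR : ∑ v, R v = 0) :
    ∃ y : V → ℝ,
      (∀ v, ∑ e, incidence ends v e * ((ω e)⁻¹ * edgeJump ends y e) = R v) ∧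
      (∀ d : E → ℝ, (∀ v, ∑ e, incidence ends v e * d e = R v) →
        (∑ e, ω e * ((ω e)⁻¹ * edgeJump ends y e)^2 ≤ ∑ e, ω e * d e^2) ∧
        (∑ e, ω e * d e^2 = ∑ e, ω e * ((ω e)⁻¹ * edgeJump ends y e)^2 →
          ∀ e, d e = (ω e)⁻¹ * edgeJump ends y e)) := by
  obtain ⟨y, hy⟩ : R ∈ LinearMap.range (weightedLaplacian ends ω) := by
    rw [range_weightedLaplacian ends hω hconn, LinearMap.mem_ker]
    simpa [Fintype.linearCombination_apply] using hR
  refine ⟨y, congrFun hy, fun d hd ↦ ?_⟩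
  have hpyth := sum_mul_sq_eq_add_sum_mul_sq_sub_of_weightedLaplacian ends
    (fun e ↦ (hω e).ne') fun v ↦ (hd v).trans (congrFun hy v).symm
  have hdefect : 0 ≤ ∑ e, ω e * (d e - (ω e)⁻¹ * edgeJump ends y e) ^ 2 :=
    Finset.sum_nonneg fun e _ ↦ mul_nonneg (hω e).le (sq_nonneg _)
  refine ⟨by linarith, fun heq e ↦ sub_eq_zero.mp ?_⟩
  exact eq_zero_of_sum_mul_sq_eq_zero hω (by linarith) e
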